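/- Let d1, d2 be positive integers, D = d1·d2, and H_Δ(k) = W_Δ(k) − 2·W_Δ(k−D) + W_Δ(k−2D) where W_Δ(k) = #{v ∈ ℤ²_{≥0} : max(v1/d1, v2/d2) = k/D}. Then H_Δ(k) ≥ 0 for all k ≥ 0, and H_Δ(k) = 0 for all k > 2D. -/

import Mathlib

/-!
Clearing denominators, a lattice point `(a, b)` has weight `K / D` iff `max (a d₂) (b d₁) = K`,
and such points lie on the two edges `a d₂ = K, b d₁ ≤ K` and `b d₁ = K, a d₂ ≤ K` of a box.
Counting them gives `W(K + D) = W(K) + J(K)`, where `J(K) = [d₂ ∣ K] d₂ + [d₁ ∣ K] d₁` is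
`D`-periodic, so the second difference `H` vanishes from `2D` on. For `D ≤ k < 2D` one gets
`H(k) = J(k - D) - W(k - D)`, which is nonnegative because `W(K) ≤ J(K)` when `K < D`.
-/

open Finset

theorem max_div_eq_div_mul_iff {𝕜 : Type*} [Field 𝕜] [LinearOrder 𝕜] [IsStrictOrderedRing 𝕜]
    {x y d₁ d₂ K : 𝕜} (hd₁ : 0 < d₁) (hd₂ : 0 < d₂) :
    max (x / d₁) (y / d₂) = K / (d₁ * d₂) ↔ max (x * d₂) (y * d₁) = K := by
  have hD : 0 < d₁ * d₂ := mul_pos hd₁ hd₂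
  rw [show x / d₁ = x * d₂ / (d₁ * d₂) by field_simp, show y / d₂ = y * d₁ / (d₁ * d₂) by
    field_simp, max_div_div_right hD.le, div_left_inj' hD.ne']

namespace Lattice

variable {d₁ d₂ : ℕ}

noncomputable def weightCount (d₁ d₂ K : ℕ) : ℕ :=
  Nat.card {v : ℕ × ℕ | max (v.1 * d₂) (v.2 * d₁) = K}

def weightJump (d₁ d₂ K : ℕ) : ℕ :=
  (if d₂ ∣ K then d₂ else 0) + (if d₁ ∣ K then d₁ else 0)

theorem setOf_weight_eq (hd₁ : 0 < d₁) (hd₂ : 0 < d₂) (K : ℕ) :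
    {v : ℕ × ℕ | max ((v.1 : ℚ) / d₁) ((v.2 : ℚ) / d₂) = (K : ℚ) / ((d₁ : ℚ) * d₂)} =
      {v : ℕ × ℕ | max (v.1 * d₂) (v.2 * d₁) = K} := by
  ext v
  rw [Set.mem_ofPred_eq, max_div_eq_div_mul_iff (by exact_mod_cast hd₁) (by exact_mod_cast hd₂)]
  exact_mod_cast Iff.rfl

theorem card_filter_mul_eq {d : ℕ} (hd : 0 < d) (K : ℕ) :
    #{a ∈ range (K + 1) | a * d = K} = if d ∣ K then 1 else 0 := by
  split_ifs with h
  · rw [card_eq_one]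
    refine ⟨K / d, eq_singleton_iff_unique_mem.2 ⟨?_, fun a ha => ?_⟩⟩
    · simp [Nat.div_mul_cancel h, Nat.lt_succ_of_le (Nat.div_le_self K d)]
    · exact (Nat.div_eq_of_eq_mul_left hd (mem_filter.1 ha).2.symm).symm
  · exact card_eq_zero.2 <| filter_eq_empty_iff.2 fun a _ ha => h ⟨a, by rw [← ha, mul_comm]⟩

theorem filter_mul_le_eq_range {d : ℕ} (hd : 0 < d) (K : ℕ) :
    {a ∈ range (K + 1) | a * d ≤ K} = range (K / d + 1) := by
  ext a
  simp only [mem_filter, mem_range, Nat.lt_succ_iff, ← Nat.le_div_iff_mul_le hd]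
  exact ⟨And.right, fun h => ⟨h.trans (Nat.div_le_self K d), h⟩⟩

theorem weightCount_eq_card_filter (hd₁ : 0 < d₁) (hd₂ : 0 < d₂) (K : ℕ) :
    weightCount d₁ d₂ K =
      #{v ∈ range (K + 1) ×ˢ range (K + 1) | max (v.1 * d₂) (v.2 * d₁) = K} := by
  rw [weightCount, ← Set.ncard_coe_finset, ← Nat.card_coe_set_eq]
  congr! 2
  ext v
  simp only [Set.mem_ofPred_eq, coe_filter, mem_product, mem_range, Nat.lt_succ_iff]
  refine ⟨fun h => ⟨⟨?_, ?_⟩, h⟩, And.right⟩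
  · exact (Nat.le_mul_of_pos_right _ hd₂).trans (h ▸ le_max_left _ _)
  · exact (Nat.le_mul_of_pos_right _ hd₁).trans (h ▸ le_max_right _ _)

theorem weightCount_add_ite_mul_ite (hd₁ : 0 < d₁) (hd₂ : 0 < d₂) (K : ℕ) :
    weightCount d₁ d₂ K + (if d₂ ∣ K then 1 else 0) * (if d₁ ∣ K then 1 else 0) =
      (if d₂ ∣ K then 1 else 0) * (K / d₁ + 1) + (if d₁ ∣ K then 1 else 0) * (K / d₂ + 1) := by
  set s := range (K + 1) ×ˢ range (K + 1)
  have hunion : {v ∈ s | max (v.1 * d₂) (v.2 * d₁) = K} =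
      {v ∈ s | v.1 * d₂ = K ∧ v.2 * d₁ ≤ K} ∪ {v ∈ s | v.1 * d₂ ≤ K ∧ v.2 * d₁ = K} := by
    rw [← filter_or]
    refine filter_congr fun v _ => ?_
    rcases le_total (v.1 * d₂) (v.2 * d₁) with h | h <;>
      simp only [max_eq_left, max_eq_right, h] <;> omega
  have hinter : {v ∈ s | v.1 * d₂ = K ∧ v.2 * d₁ ≤ K} ∩ {v ∈ s | v.1 * d₂ ≤ K ∧ v.2 * d₁ = K} =
      {v ∈ s | v.1 * d₂ = K ∧ v.2 * d₁ = K} := by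
    rw [← filter_and]
    exact filter_congr fun v _ => by omega
  have hcard := card_union_add_card_inter {v ∈ s | v.1 * d₂ = K ∧ v.2 * d₁ ≤ K}
    {v ∈ s | v.1 * d₂ ≤ K ∧ v.2 * d₁ = K}
  rw [← hunion, hinter] at hcard
  rw [filter_product (fun a => a * d₂ = K) (fun b => b * d₁ ≤ K),
    filter_product (fun a => a * d₂ ≤ K) (fun b => b * d₁ = K),
    filter_product (fun a => a * d₂ = K) (fun b => b * d₁ = K)] at hcard
  simp only [card_product, card_filter_mul_eq hd₁, card_filter_mul_eq hd₂,
    filter_mul_le_eq_range hd₁, filter_mul_le_eq_range hd₂, card_range] at hcard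
  rw [weightCount_eq_card_filter hd₁ hd₂]
  linarith

theorem weightJump_add_mul (K : ℕ) : weightJump d₁ d₂ (K + d₁ * d₂) = weightJump d₁ d₂ K := by
  simp only [weightJump, Nat.dvd_add_left (dvd_mul_left d₂ d₁),
    Nat.dvd_add_left (dvd_mul_right d₁ d₂)]

theorem weightCount_add_mul (hd₁ : 0 < d₁) (hd₂ : 0 < d₂) (K : ℕ) :
    weightCount d₁ d₂ (K + d₁ * d₂) = weightCount d₁ d₂ K + weightJump d₁ d₂ K := by
  have hK := weightCount_add_ite_mul_ite hd₁ hd₂ K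
  have hKD := weightCount_add_ite_mul_ite hd₁ hd₂ (K + d₁ * d₂)
  simp only [Nat.dvd_add_left (dvd_mul_left d₂ d₁), Nat.dvd_add_left (dvd_mul_right d₁ d₂),
    Nat.add_mul_div_left _ _ hd₁, Nat.add_mul_div_right _ _ hd₂] at hKD
  unfold weightJump
  split_ifs at hK hKD ⊢ <;> linarith

theorem weightCount_le_weightJump (hd₁ : 0 < d₁) (hd₂ : 0 < d₂) {K : ℕ} (hK : K < d₁ * d₂) :
    weightCount d₁ d₂ K ≤ weightJump d₁ d₂ K := by
  have hcount := weightCount_add_ite_mul_ite hd₁ hd₂ K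
  have h₁ : K / d₁ < d₂ := Nat.div_lt_of_lt_mul hK
  have h₂ : K / d₂ < d₁ := Nat.div_lt_of_lt_mul (mul_comm d₁ d₂ ▸ hK)
  unfold weightJump
  split_ifs at hcount ⊢ <;> omega

end Lattice

open Lattice in
/-- With `W_Δ(k)` counting lattice points of weight exactly `k/D` (`D = d1·d2`), `W` of
negative arguments zero, and `H_Δ(k) = W_Δ(k) − 2·W_Δ(k−D) + W_Δ(k−2D)`, we have
`H_Δ(k) ≥ 0` for all `k ≥ 0` and `H_Δ(k) = 0` for all `k > 2D`. -/
theorem H_nonneg_and_vanishes (d1 d2 : ℕ) (hd1 : 0 < d1) (hd2 : 0 < d2)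
    (W : ℤ → ℕ)
    (hW : ∀ k : ℤ, W k = if 0 ≤ k then
      Nat.card {v : ℕ × ℕ |
        max ((v.1 : ℚ) / d1) ((v.2 : ℚ) / d2) = (k : ℚ) / ((d1 : ℚ) * d2)}
      else 0) :
    (∀ k : ℤ, 0 ≤ k →
      0 ≤ (W k : ℤ) - 2 * (W (k - d1 * d2) : ℤ) + (W (k - 2 * (d1 * d2)) : ℤ)) ∧
    (∀ k : ℤ, 2 * (d1 * d2 : ℤ) < k →
      (W k : ℤ) - 2 * (W (k - d1 * d2) : ℤ) + (W (k - 2 * (d1 * d2)) : ℤ) = 0) := by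
  have hW_nat (K : ℕ) : W K = weightCount d1 d2 K := by
    rw [hW, if_pos K.cast_nonneg, Int.cast_natCast, setOf_weight_eq hd1 hd2, weightCount]
  have hW_neg (k : ℤ) (hk : k < 0) : W k = 0 := by rw [hW, if_neg hk.not_ge]
  have hW_step (K : ℕ) : W (K + d1 * d2) = W K + weightJump d1 d2 K := by
    rw [hW_nat, ← weightCount_add_mul hd1 hd2, ← hW_nat]; push_cast; rfl
  have hvanish (k : ℤ) (hk : 2 * (d1 * d2 : ℤ) ≤ k) :
      (W k : ℤ) - 2 * (W (k - d1 * d2) : ℤ) + (W (k - 2 * (d1 * d2)) : ℤ) = 0 := by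
    obtain ⟨K, hK⟩ := Int.eq_ofNat_of_zero_le (sub_nonneg.2 hk)
    have hstep₂ := hW_step (K + d1 * d2)
    rw [weightJump_add_mul] at hstep₂
    push_cast at hstep₂
    rw [show k - d1 * d2 = K + d1 * d2 by linarith, hK, show k = K + d1 * d2 + d1 * d2 by linarith,
      hstep₂, hW_step]
    push_cast
    ring
  refine ⟨fun k hk => ?_, fun k hk => hvanish k hk.le⟩
  rcases lt_or_ge k (d1 * d2) with hk₁ | hk₁
  · rw [hW_neg (k - d1 * d2) (by linarith), hW_neg (k - 2 * (d1 * d2)) (by linarith)]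
    simp
  rcases le_or_gt (2 * (d1 * d2 : ℤ)) k with hk₂ | hk₂
  · exact (hvanish k hk₂).ge
  obtain ⟨K, hK⟩ := Int.eq_ofNat_of_zero_le (sub_nonneg.2 hk₁)
  have hKD : K < d1 * d2 := by exact_mod_cast (show (K : ℤ) < d1 * d2 by linarith)
  rw [show k = K + d1 * d2 by linarith, add_sub_cancel_right, hW_step, hW_nat,
    hW_neg _ (by linarith)]
  have := weightCount_le_weightJump hd1 hd2 hKD
  push_cast
  linarith
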